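/- arXiv:1709.02102 — 2 statements merged into one kernel-verified Lean document; each statement's English description precedes it below -/
import Mathlib

section
/- For every ω-word w and LTL formulas φ, ψ, w satisfies FG(φ ∨ G ψ) if and only if w satisfies FG φ ∨ FG ψ. -/
/-! `FG χ` says that `χ` holds eventually along `atTop`. Past the point from which `φ ∨ G ψ` always
holds, either `G ψ` holds at some position, and then `ψ` holds eventually, or it never does, and
then `φ` holds at every later position. -/

inductive LTL (Ap : Type) : Type
  | tt : LTL Ap
  | ff : LTL Ap
  | atom : Ap → LTL Ap
  | natom : Ap → LTL Ap
  | and : LTL Ap → LTL Ap → LTL Ap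
  | or : LTL Ap → LTL Ap → LTL Ap
  | next : LTL Ap → LTL Ap
  | untl : LTL Ap → LTL Ap → LTL Ap
  | release : LTL Ap → LTL Ap → LTL Ap

def LTL.F {Ap : Type} (φ : LTL Ap) : LTL Ap := LTL.untl LTL.tt φ
def LTL.G {Ap : Type} (φ : LTL Ap) : LTL Ap := LTL.release LTL.ff φ

/-- suffix w_i of the ω-word w -/
def suff {Ap : Type} (w : ℕ → Set Ap) (i : ℕ) : ℕ → Set Ap := fun j => w (i + j)

/-- LTL satisfaction relation w ⊨ φ -/
def Sat {Ap : Type} : (ℕ → Set Ap) → LTL Ap → Prop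
  | _, .tt => True
  | _, .ff => False
  | w, .atom a => a ∈ w 0
  | w, .natom a => a ∉ w 0
  | w, .and φ ψ => Sat w φ ∧ Sat w ψ
  | w, .or φ ψ => Sat w φ ∨ Sat w ψ
  | w, .next φ => Sat (suff w 1) φ
  | w, .untl φ ψ => ∃ i, Sat (suff w i) ψ ∧ ∀ j < i, Sat (suff w j) φ
  | w, .release φ ψ =>
      (∀ i, Sat (suff w i) ψ) ∨ ∃ i, Sat (suff w i) φ ∧ ∀ j, j ≤ i → Sat (suff w j) ψ

open Filter

theorem Filter.eventually_or_forall_ge_atTop {α : Type*} [Preorder α] {p q : α → Prop} :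
    (∀ᶠ x in atTop, p x ∨ ∀ y, x ≤ y → q y) ↔ (∀ᶠ x in atTop, p x) ∨ ∀ᶠ x in atTop, q x := by
  constructor
  · intro h
    by_cases hq : ∃ x, ∀ y, x ≤ y → q y
    · obtain ⟨x, hx⟩ := hq
      exact Or.inr ((eventually_ge_atTop x).mono hx)
    · exact Or.inl (h.mono fun x hx => hx.resolve_right fun hall => hq ⟨x, hall⟩)
  · rintro (hp | hq)
    · exact hp.mono fun _ => Or.inl
    · exact (eventually_forall_ge_atTop.2 hq).mono fun _ => Or.inr

section LTL

variable {Ap : Type} (w : ℕ → Set Ap) (φ ψ : LTL Ap)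

theorem suff_suff (i j : ℕ) : suff (suff w i) j = suff w (i + j) := by
  funext k
  simp only [suff, Nat.add_assoc]

theorem sat_or : Sat w (φ.or ψ) ↔ Sat w φ ∨ Sat w ψ := Iff.rfl

theorem sat_F : Sat w φ.F ↔ ∃ i, Sat (suff w i) φ := by
  simp [LTL.F, Sat]

theorem sat_G : Sat w φ.G ↔ ∀ i, Sat (suff w i) φ := by
  simp [LTL.G, Sat]

theorem sat_suff_G (n : ℕ) : Sat (suff w n) φ.G ↔ ∀ m, n ≤ m → Sat (suff w m) φ := by
  simp only [sat_G, suff_suff]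
  exact ⟨fun h m hnm => Nat.add_sub_of_le hnm ▸ h (m - n),
    fun h k => h (n + k) (Nat.le_add_right n k)⟩

theorem sat_FG : Sat w φ.G.F ↔ ∀ᶠ n in atTop, Sat (suff w n) φ := by
  rw [sat_F, eventually_atTop]
  exact exists_congr fun n => sat_suff_G w φ n

end LTL

theorem FG_or_G {Ap : Type} (w : ℕ → Set Ap) (φ ψ : LTL Ap) :
    Sat w (LTL.F (LTL.G (LTL.or φ (LTL.G ψ)))) ↔
      Sat w (LTL.or (LTL.F (LTL.G φ)) (LTL.F (LTL.G ψ))) := by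
  simp only [sat_or, sat_FG, sat_suff_G]
  exact eventually_or_forall_ge_atTop
end

section
/- Let φ be an LTL(X) formula (only literals, ∧, ∨, and X) and let H(φ) be its relevant history, defined recursively by H(tt) = H(ff) = ε, H(a) = H(¬a) = {a} (a one-letter word), H(φ∧ψ) = H(φ∨ψ) = H(φ) ⊔ H(ψ) (pointwise union, padding the shorter word with its own letters), and H(Xφ) = ∅·H(φ). Then for every ω-word w over 2^Ap, w ⊨ φ if and only if w ⊓ H(φ) ⊨ φ, where w ⊓ H(φ) is the ω-word obtained by intersecting w pointwise with H(φ) and continuing with ∅ afterwards. -/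
inductive OnlyX {Ap : Type} : LTL Ap → Prop
  | tt : OnlyX .tt
  | ff : OnlyX .ff
  | atom (a : Ap) : OnlyX (.atom a)
  | natom (a : Ap) : OnlyX (.natom a)
  | and {φ ψ : LTL Ap} : OnlyX φ → OnlyX ψ → OnlyX (.and φ ψ)
  | or {φ ψ : LTL Ap} : OnlyX φ → OnlyX ψ → OnlyX (.or φ ψ)
  | next {φ : LTL Ap} : OnlyX φ → OnlyX (.next φ)

/-- pointwise union of finite words, padding the shorter one -/
def lunion {Ap : Type} : List (Set Ap) → List (Set Ap) → List (Set Ap)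
  | [], v => v
  | u, [] => u
  | a :: u, b :: v => (a ∪ b) :: lunion u v

/-- the relevant history H(φ) of an LTL(X) formula -/
def hist {Ap : Type} : LTL Ap → List (Set Ap)
  | .atom a => [{a}]
  | .natom a => [{a}]
  | .and φ ψ => lunion (hist φ) (hist ψ)
  | .or φ ψ => lunion (hist φ) (hist ψ)
  | .next φ => ∅ :: hist φ
  | _ => []

/-! Every letter an LTL(X) formula inspects lies in its relevant history, so by induction on the
formula two ω-words that agree on H(φ) satisfy φ alike; and w agrees with w ⊓ H(φ) on H(φ). -/

theorem getD_lunion {Ap : Type} (u v : List (Set Ap)) (i : ℕ) :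
    (lunion u v).getD i ∅ = u.getD i ∅ ∪ v.getD i ∅ := by
  induction u generalizing v i with
  | nil => simp [lunion]
  | cons a u ih =>
    cases v with
    | nil => simp [lunion]
    | cons b v =>
      cases i with
      | zero => simp [lunion]
      | succ i => simpa [lunion] using ih v i

theorem sat_iff_of_agree_on_hist {Ap : Type} {φ : LTL Ap} (h : OnlyX φ) {w w' : ℕ → Set Ap}
    (hw : ∀ i, ∀ a ∈ (hist φ).getD i ∅, a ∈ w i ↔ a ∈ w' i) : Sat w φ ↔ Sat w' φ := by
  induction h generalizing w w' with
  | tt | ff => rfl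
  | atom a | natom a =>
    simp only [Sat, hw 0 a (by simp [hist])]
  | and _ _ ih₁ ih₂ | or _ _ ih₁ ih₂ =>
    simp only [hist, getD_lunion] at hw
    simp only [Sat, ih₁ fun i a ha => hw i a (.inl ha), ih₂ fun i a ha => hw i a (.inr ha)]
  | next _ ih =>
    exact ih fun i a ha => by simpa [suff, Nat.add_comm] using hw (i + 1) a (by simpa [hist])

theorem relevant_history {Ap : Type} (φ : LTL Ap) (h : OnlyX φ) (w : ℕ → Set Ap) :
    Sat w φ ↔ Sat (fun i => w i ∩ (hist φ).getD i ∅) φ :=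
  sat_iff_of_agree_on_hist h fun _ _ ha => (and_iff_left ha).symm
end
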